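/- arXiv:1308.2775 — 12 statements merged into one kernel-verified Lean document; each statement's English description precedes it below -/
import Mathlib

section
/- Let B ≤ V and E ≤ W be subspaces with B ∩ ker T = {0} and W = E ⊕ T(B). Then there exists a unique outer inverse G of T with image G = B and kernel G = E. -/
/-! An outer inverse `G` of `T` with range `B` is a left inverse of `T` on `B`, so it is forced
on `T(B)` as well as on its kernel `E`; as `W = E ⊕ T(B)`, this gives uniqueness. For
existence, `T` restricts to an isomorphism `B ≃ T(B)` because `B ∩ ker T = 0`, and `G` is its
inverse precomposed with the projection of `W` onto `T(B)` along `E`. -/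

namespace LinearMap

variable {R M N : Type*} [Ring R] [AddCommGroup M] [Module R M] [AddCommGroup N] [Module R N]

theorem apply_apply_of_comp_comp_eq {T : M →ₗ[R] N} {G : N →ₗ[R] M} (hG : G ∘ₗ T ∘ₗ G = G)
    {x : M} (hx : x ∈ range G) : G (T x) = x := by
  obtain ⟨w, rfl⟩ := hx
  exact LinearMap.congr_fun hG w

theorem eq_of_comp_comp_eq_of_range_eq_of_ker_eq {T : M →ₗ[R] N} {G G' : N →ₗ[R] M}
    (hG : G ∘ₗ T ∘ₗ G = G) (hG' : G' ∘ₗ T ∘ₗ G' = G') (hrange : range G' = range G)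
    (hker : ker G' = ker G) (hcod : Codisjoint (ker G) ((range G).map T)) : G = G' := by
  refine ext_on_codisjoint hcod (fun w hw => ?_) ?_
  · rw [mem_ker.1 hw, mem_ker.1 (hker ▸ hw : w ∈ ker G')]
  · rintro _ ⟨x, hx, rfl⟩
    rw [apply_apply_of_comp_comp_eq hG hx, apply_apply_of_comp_comp_eq hG' (hrange ▸ hx)]

noncomputable def outerInverseOfIsCompl (T : M →ₗ[R] N) {B : Submodule R M} {E : Submodule R N}
    (hB : Disjoint B (ker T)) (hBE : IsCompl (B.map T) E) : N →ₗ[R] M :=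
  B.subtype ∘ₗ linearProjOfIsCompl E (T.domRestrict B) (injective_domRestrict_iff.2 hB)
    (by rwa [range_domRestrict])

variable {T : M →ₗ[R] N} {B : Submodule R M} {E : Submodule R N}
  (hB : Disjoint B (ker T)) (hBE : IsCompl (B.map T) E)

theorem outerInverseOfIsCompl_apply_of_mem {x : M} (hx : x ∈ B) :
    outerInverseOfIsCompl T hB hBE (T x) = x :=
  congrArg Subtype.val (linearProjOfIsCompl_apply_left _ (T.domRestrict B) _ _ ⟨x, hx⟩)

theorem outerInverseOfIsCompl_mem (w : N) : outerInverseOfIsCompl T hB hBE w ∈ B :=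
  Subtype.property _

theorem outerInverseOfIsCompl_comp_comp :
    outerInverseOfIsCompl T hB hBE ∘ₗ T ∘ₗ outerInverseOfIsCompl T hB hBE =
      outerInverseOfIsCompl T hB hBE :=
  LinearMap.ext fun w =>
    outerInverseOfIsCompl_apply_of_mem hB hBE (outerInverseOfIsCompl_mem hB hBE w)

theorem range_outerInverseOfIsCompl : range (outerInverseOfIsCompl T hB hBE) = B :=
  le_antisymm (range_le_iff_comap.2 (eq_top_iff.2 fun w _ => outerInverseOfIsCompl_mem hB hBE w))
    fun x hx => ⟨T x, outerInverseOfIsCompl_apply_of_mem hB hBE hx⟩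

theorem ker_outerInverseOfIsCompl : ker (outerInverseOfIsCompl T hB hBE) = E := by
  rw [outerInverseOfIsCompl, ker_comp_of_ker_eq_bot _ B.ker_subtype, ker_linearProjOfIsCompl]

end LinearMap

open LinearMap

theorem exists_unique_outer_inverse {F V W : Type*} [Field F]
    [AddCommGroup V] [Module F V] [AddCommGroup W] [Module F W]
    (T : V →ₗ[F] W) (B : Submodule F V) (E : Submodule F W)
    (hB : B ⊓ LinearMap.ker T = ⊥)
    (hdisj : Disjoint E (Submodule.map T B))
    (hsum : E ⊔ Submodule.map T B = ⊤) :
    ∃! G : W →ₗ[F] V, G ∘ₗ T ∘ₗ G = G ∧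
      LinearMap.range G = B ∧ LinearMap.ker G = E := by
  have hB' : Disjoint B (ker T) := disjoint_iff.2 hB
  have hBE : IsCompl (B.map T) E := ⟨hdisj.symm, codisjoint_iff.2 (sup_comm E _ ▸ hsum)⟩
  refine ⟨outerInverseOfIsCompl T hB' hBE, ⟨outerInverseOfIsCompl_comp_comp hB' hBE,
    range_outerInverseOfIsCompl hB' hBE, ker_outerInverseOfIsCompl hB' hBE⟩, ?_⟩
  rintro G ⟨hG, rfl, rfl⟩
  exact eq_of_comp_comp_eq_of_range_eq_of_ker_eq hG (outerInverseOfIsCompl_comp_comp hB' hBE)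
    (range_outerInverseOfIsCompl hB' hBE) (ker_outerInverseOfIsCompl hB' hBE)
    (codisjoint_iff.2 hsum)
end

section
/- Let T₁ : V → W and T₂ : U → V be linear maps with outer inverses G₁ and G₂ respectively. Then G₂G₁ is an outer inverse of T₁T₂ if and only if (T₂G₂)(G₁T₁) is idempotent. -/
/-!
With `P = T₂G₂G₁T₁`, conjugating `G₂G₁T₁T₂G₂G₁` by `T₂ · T₁` gives `P²`. Conversely, since
`G₂ = G₂T₂G₂` and `G₁ = G₁T₁G₁`, we have `G₂ P G₁ = G₂G₁` and `G₂ P² G₁ = G₂G₁T₁T₂G₂G₁`,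
so `P² = P` yields `G₂G₁T₁T₂G₂G₁ = G₂G₁`.
-/

open LinearMap

section OuterInverse

variable {R U V W : Type*} [Semiring R]
    [AddCommMonoid U] [Module R U] [AddCommMonoid V] [Module R V]
    [AddCommMonoid W] [Module R W]
    {T₁ : V →ₗ[R] W} {T₂ : U →ₗ[R] V} {G₁ : W →ₗ[R] V} {G₂ : V →ₗ[R] U}

theorem LinearMap.comp_sandwich_of_outer (h₁ : G₁ ∘ₗ T₁ ∘ₗ G₁ = G₁)
    (h₂ : G₂ ∘ₗ T₂ ∘ₗ G₂ = G₂) (X : V →ₗ[R] V) :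
    G₂ ∘ₗ (T₂ ∘ₗ G₂ ∘ₗ X ∘ₗ G₁ ∘ₗ T₁) ∘ₗ G₁ = G₂ ∘ₗ X ∘ₗ G₁ := by
  calc G₂ ∘ₗ (T₂ ∘ₗ G₂ ∘ₗ X ∘ₗ G₁ ∘ₗ T₁) ∘ₗ G₁
      = (G₂ ∘ₗ T₂ ∘ₗ G₂) ∘ₗ X ∘ₗ (G₁ ∘ₗ T₁ ∘ₗ G₁) := by simp only [comp_assoc]
    _ = G₂ ∘ₗ X ∘ₗ G₁ := by rw [h₁, h₂]

end OuterInverse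

theorem reverse_order_outer_iff_idem {F U V W : Type*} [Field F]
    [AddCommGroup U] [Module F U] [AddCommGroup V] [Module F V]
    [AddCommGroup W] [Module F W]
    (T₁ : V →ₗ[F] W) (T₂ : U →ₗ[F] V) (G₁ : W →ₗ[F] V) (G₂ : V →ₗ[F] U)
    (h₁ : G₁ ∘ₗ T₁ ∘ₗ G₁ = G₁) (h₂ : G₂ ∘ₗ T₂ ∘ₗ G₂ = G₂) :
    (G₂ ∘ₗ G₁) ∘ₗ (T₁ ∘ₗ T₂) ∘ₗ (G₂ ∘ₗ G₁) = G₂ ∘ₗ G₁ ↔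
      ((T₂ ∘ₗ G₂) ∘ₗ (G₁ ∘ₗ T₁)) ∘ₗ ((T₂ ∘ₗ G₂) ∘ₗ (G₁ ∘ₗ T₁)) =
        (T₂ ∘ₗ G₂) ∘ₗ (G₁ ∘ₗ T₁) := by
  constructor
  · intro h
    simpa only [comp_assoc] using congrArg (fun G => T₂ ∘ₗ G ∘ₗ T₁) h
  · intro h
    have sandwiched := congrArg (fun P => G₂ ∘ₗ P ∘ₗ G₁) h
    have hsq := comp_sandwich_of_outer h₁ h₂ (G₁ ∘ₗ T₁ ∘ₗ T₂ ∘ₗ G₂)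
    have hid := comp_sandwich_of_outer h₁ h₂ LinearMap.id
    simp only [comp_assoc, id_comp] at sandwiched hsq hid ⊢
    rwa [hsq, hid] at sandwiched
end

section
/- Let T₁ : V → W and T₂ : U → V be linear maps with inner inverses G₁ and G₂ respectively. Then G₂G₁ is an inner inverse of T₁T₂ if and only if (G₁T₁)(T₂G₂) is idempotent. -/
/-!
Write `P = G₁T₁T₂G₂`. Sandwiching gives `P² = G₁(T₁T₂G₂G₁T₁T₂)G₂`, so an inner inverse `G₂G₁` of `T₁T₂`
makes `P` idempotent. Conversely, `T₁PT₂ = T₁T₂` because `Gᵢ` is an inner inverse of `Tᵢ`, and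
`T₁P²T₂ = T₁T₂G₂G₁T₁T₂` for the same reason, so `P² = P` turns the second identity into the first.
-/

namespace LinearMap

variable {R U V W : Type*} [Semiring R]
  [AddCommMonoid U] [Module R U] [AddCommMonoid V] [Module R V] [AddCommMonoid W] [Module R W]
  {T₁ : V →ₗ[R] W} {T₂ : U →ₗ[R] V} {G₁ : W →ₗ[R] V} {G₂ : V →ₗ[R] U}

theorem comp_idempotent_of_reverse_order_inner
    (h : (T₁ ∘ₗ T₂) ∘ₗ (G₂ ∘ₗ G₁) ∘ₗ (T₁ ∘ₗ T₂) = T₁ ∘ₗ T₂) :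
    ((G₁ ∘ₗ T₁) ∘ₗ (T₂ ∘ₗ G₂)) ∘ₗ ((G₁ ∘ₗ T₁) ∘ₗ (T₂ ∘ₗ G₂)) =
      (G₁ ∘ₗ T₁) ∘ₗ (T₂ ∘ₗ G₂) := by
  simpa only [comp_assoc] using congrArg (fun S ↦ G₁ ∘ₗ S ∘ₗ G₂) h

theorem comp_sandwich_of_inner_inverse (h₁ : T₁ ∘ₗ G₁ ∘ₗ T₁ = T₁) (h₂ : T₂ ∘ₗ G₂ ∘ₗ T₂ = T₂)
    (S : V →ₗ[R] V) : T₁ ∘ₗ (G₁ ∘ₗ T₁) ∘ₗ S ∘ₗ (T₂ ∘ₗ G₂) ∘ₗ T₂ = T₁ ∘ₗ S ∘ₗ T₂ := by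
  calc T₁ ∘ₗ (G₁ ∘ₗ T₁) ∘ₗ S ∘ₗ (T₂ ∘ₗ G₂) ∘ₗ T₂
      = (T₁ ∘ₗ G₁ ∘ₗ T₁) ∘ₗ S ∘ₗ T₂ ∘ₗ G₂ ∘ₗ T₂ := by simp only [comp_assoc]
    _ = T₁ ∘ₗ S ∘ₗ T₂ := by rw [h₁, h₂]

theorem reverse_order_inner_of_comp_idempotent
    (h₁ : T₁ ∘ₗ G₁ ∘ₗ T₁ = T₁) (h₂ : T₂ ∘ₗ G₂ ∘ₗ T₂ = T₂)
    (h : ((G₁ ∘ₗ T₁) ∘ₗ (T₂ ∘ₗ G₂)) ∘ₗ ((G₁ ∘ₗ T₁) ∘ₗ (T₂ ∘ₗ G₂)) =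
      (G₁ ∘ₗ T₁) ∘ₗ (T₂ ∘ₗ G₂)) :
    (T₁ ∘ₗ T₂) ∘ₗ (G₂ ∘ₗ G₁) ∘ₗ (T₁ ∘ₗ T₂) = T₁ ∘ₗ T₂ := by
  have sandwich := comp_sandwich_of_inner_inverse h₁ h₂
  calc (T₁ ∘ₗ T₂) ∘ₗ (G₂ ∘ₗ G₁) ∘ₗ (T₁ ∘ₗ T₂)
      = T₁ ∘ₗ (G₁ ∘ₗ T₁) ∘ₗ (T₂ ∘ₗ G₂ ∘ₗ G₁ ∘ₗ T₁) ∘ₗ (T₂ ∘ₗ G₂) ∘ₗ T₂ := by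
        rw [sandwich]; simp only [comp_assoc]
    _ = T₁ ∘ₗ (((G₁ ∘ₗ T₁) ∘ₗ (T₂ ∘ₗ G₂)) ∘ₗ ((G₁ ∘ₗ T₁) ∘ₗ (T₂ ∘ₗ G₂))) ∘ₗ T₂ := by
        simp only [comp_assoc]
    _ = T₁ ∘ₗ T₂ := by
        rw [h]; simpa only [comp_id, id_comp, comp_assoc] using sandwich id

end LinearMap

theorem reverse_order_inner_iff_idem {F U V W : Type*} [Field F]
    [AddCommGroup U] [Module F U] [AddCommGroup V] [Module F V]
    [AddCommGroup W] [Module F W]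
    (T₁ : V →ₗ[F] W) (T₂ : U →ₗ[F] V) (G₁ : W →ₗ[F] V) (G₂ : V →ₗ[F] U)
    (h₁ : T₁ ∘ₗ G₁ ∘ₗ T₁ = T₁) (h₂ : T₂ ∘ₗ G₂ ∘ₗ T₂ = T₂) :
    (T₁ ∘ₗ T₂) ∘ₗ (G₂ ∘ₗ G₁) ∘ₗ (T₁ ∘ₗ T₂) = T₁ ∘ₗ T₂ ↔
      ((G₁ ∘ₗ T₁) ∘ₗ (T₂ ∘ₗ G₂)) ∘ₗ ((G₁ ∘ₗ T₁) ∘ₗ (T₂ ∘ₗ G₂)) =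
        (G₁ ∘ₗ T₁) ∘ₗ (T₂ ∘ₗ G₂) :=
  ⟨LinearMap.comp_idempotent_of_reverse_order_inner,
    LinearMap.reverse_order_inner_of_comp_idempotent h₁ h₂⟩
end

section
/- Let T₁ : V → W and T₂ : U → V be linear maps, G₂ an inner inverse of T₂, and W₁ ≤ W a subspace. Then the preimage (T₁T₂)⁻¹(W₁) equals G₂(T₁⁻¹(W₁) ∩ im T₂) ⊕ ker T₂ (an internal direct sum). -/
/-!
If `T ∘ G ∘ T = T`, then `P = G ∘ T` is an idempotent with `ker P = ker T`, so `U = range P ⊕ ker T`.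
A submodule `N ⊇ ker P` is the sum of its image under `P` and `ker P`, because `x - P x ∈ ker P`.
Apply this to `N = T⁻¹(S)` with `S = T₁⁻¹(W₁)`: its image `G (T N)` is `G (S ∩ range T)`.
-/

namespace LinearMap

variable {R U V : Type*} [Ring R] [AddCommGroup U] [Module R U] [AddCommGroup V] [Module R V]

theorem IsIdempotentElem.map_sup_ker_eq {P : Module.End R U} (hP : IsIdempotentElem P)
    {N : Submodule R U} (hN : ker P ≤ N) : N.map P ⊔ ker P = N := by
  have sub_mem_ker (x : U) : x - P x ∈ ker P := IsIdempotentElem.ker_eq_range hP ▸ ⟨x, rfl⟩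
  refine le_antisymm (sup_le ?_ hN) fun x hx => ?_
  · rintro _ ⟨x, hx, rfl⟩
    simpa using N.sub_mem hx (hN (sub_mem_ker x))
  · simpa using Submodule.add_mem_sup (Submodule.mem_map_of_mem (f := P) hx) (sub_mem_ker x)

theorem map_inf_range_eq_map_comp_comap (G : V →ₗ[R] U) (T : U →ₗ[R] V) (S : Submodule R V) :
    (S ⊓ range T).map G = (S.comap T).map (G ∘ₗ T) := by
  rw [Submodule.map_comp, Submodule.map_comap_eq, inf_comm]

section InnerInverse

variable {T : U →ₗ[R] V} {G : V →ₗ[R] U}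

theorem isIdempotentElem_comp_of_comp_comp_eq (h : T ∘ₗ G ∘ₗ T = T) :
    IsIdempotentElem (G ∘ₗ T) := by
  change (G ∘ₗ T) ∘ₗ (G ∘ₗ T) = G ∘ₗ T
  rw [comp_assoc, h]

theorem ker_comp_eq_of_comp_comp_eq (h : T ∘ₗ G ∘ₗ T = T) : ker (G ∘ₗ T) = ker T := by
  refine le_antisymm (fun x hx => ?_) (ker_le_ker_comp T G)
  rw [mem_ker, ← LinearMap.congr_fun h x]
  simpa using congrArg T (mem_ker.mp hx)

theorem comap_eq_map_inf_range_sup_ker (h : T ∘ₗ G ∘ₗ T = T) (S : Submodule R V) :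
    S.comap T = (S ⊓ range T).map G ⊔ ker T := by
  rw [map_inf_range_eq_map_comp_comap, ← ker_comp_eq_of_comp_comp_eq h]
  refine (IsIdempotentElem.map_sup_ker_eq (isIdempotentElem_comp_of_comp_comp_eq h) ?_).symm
  rw [ker_comp_eq_of_comp_comp_eq h]
  exact Submodule.comap_mono bot_le

theorem disjoint_map_inf_range_ker (h : T ∘ₗ G ∘ₗ T = T) (S : Submodule R V) :
    Disjoint ((S ⊓ range T).map G) (ker T) := by
  rw [map_inf_range_eq_map_comp_comap, ← ker_comp_eq_of_comp_comp_eq h]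
  exact (IsIdempotentElem.isCompl (isIdempotentElem_comp_of_comp_comp_eq h)).disjoint.mono_left
    map_le_range

end InnerInverse

end LinearMap

theorem comap_comp_eq_map_sup_ker {F U V W : Type*} [Field F]
    [AddCommGroup U] [Module F U] [AddCommGroup V] [Module F V]
    [AddCommGroup W] [Module F W]
    (T₁ : V →ₗ[F] W) (T₂ : U →ₗ[F] V) (G₂ : V →ₗ[F] U)
    (h₂ : T₂ ∘ₗ G₂ ∘ₗ T₂ = T₂) (W₁ : Submodule F W) :
    Submodule.comap (T₁ ∘ₗ T₂) W₁ =
      Submodule.map G₂ (Submodule.comap T₁ W₁ ⊓ LinearMap.range T₂) ⊔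
        LinearMap.ker T₂ ∧
    Disjoint (Submodule.map G₂ (Submodule.comap T₁ W₁ ⊓ LinearMap.range T₂))
      (LinearMap.ker T₂) := by
  rw [Submodule.comap_comp]
  exact ⟨LinearMap.comap_eq_map_inf_range_sup_ker h₂ _,
    LinearMap.disjoint_map_inf_range_ker h₂ _⟩
end

section
/- Let P, Q : V → V be projectors. Then PQ is a projector if and only if im P ∩ (im Q + ker P) ≤ im Q ⊕ (ker P ∩ ker Q). -/
/-!
Both sides of the inclusion are ranges or kernels of products: for an idempotent `P`,
`im P ∩ (im Q + ker P) = im (P Q)`, and for an idempotent `Q`,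
`im Q ⊕ (ker P ∩ ker Q) = ker (P (1 - Q))`. So the inclusion says `P (1 - Q) P Q = 0`,
and `P (1 - Q) P Q = P Q - (P Q)²` because `P² = P`.
-/

theorem IsIdempotentElem.mul_one_sub_mul_mul_eq_zero_iff {R : Type*} [Ring R] {p q : R}
    (hp : IsIdempotentElem p) :
    p * (1 - q) * (p * q) = 0 ↔ IsIdempotentElem (p * q) := by
  rw [mul_one_sub, sub_mul, ← mul_assoc p p, hp.eq, sub_eq_zero, eq_comm]
  rfl

section

open LinearMap Submodule

variable {R M N : Type*} [Ring R] [AddCommGroup M] [Module R M] [AddCommGroup N] [Module R N]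

theorem IsIdempotentElem.range_inf_comap_of_le_range {P : M →ₗ[R] M} (hP : IsIdempotentElem P)
    {K : Submodule R M} (hK : K ≤ range P) : range P ⊓ K.comap P = K := by
  ext x
  rw [mem_inf]
  constructor
  · rintro ⟨hx, hxK⟩
    rwa [mem_comap, hP.mem_range_iff.mp hx] at hxK
  · intro hx
    exact ⟨hK hx, by rwa [mem_comap, hP.mem_range_iff.mp (hK hx)]⟩

theorem IsIdempotentElem.range_inf_range_sup_ker {P : M →ₗ[R] M} (hP : IsIdempotentElem P)
    (Q : N →ₗ[R] M) : range P ⊓ (range Q ⊔ ker P) = range (P ∘ₗ Q) := by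
  rw [← comap_map_eq, ← range_comp]
  exact hP.range_inf_comap_of_le_range (range_comp_le_range Q P)

theorem IsIdempotentElem.range_sup_ker_inf_ker {Q : M →ₗ[R] M} (hQ : IsIdempotentElem Q)
    (P : M →ₗ[R] N) : range Q ⊔ (ker P ⊓ ker Q) = ker (P ∘ₗ (1 - Q)) := by
  apply le_antisymm
  · refine sup_le ?_ fun x ⟨hPx, hQx⟩ ↦ by simp_all
    exact hQ.range_eq_ker_one_sub.le.trans (ker_le_ker_comp _ P)
  · intro x hx
    have hQ_one_sub : Q (x - Q x) = 0 := by
      rw [map_sub, ← Module.End.mul_apply, hQ.eq, sub_self]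
    exact mem_sup.mpr ⟨Q x, mem_range_self Q x, x - Q x, ⟨hx, hQ_one_sub⟩, add_sub_cancel _ _⟩

end

theorem PQ_projector_iff_v1 {F V : Type*} [Field F]
    [AddCommGroup V] [Module F V]
    (P Q : V →ₗ[F] V) (hP : P ∘ₗ P = P) (hQ : Q ∘ₗ Q = Q) :
    (P ∘ₗ Q) ∘ₗ (P ∘ₗ Q) = P ∘ₗ Q ↔
      LinearMap.range P ⊓ (LinearMap.range Q ⊔ LinearMap.ker P) ≤
        LinearMap.range Q ⊔ (LinearMap.ker P ⊓ LinearMap.ker Q) := by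
  rw [IsIdempotentElem.range_inf_range_sup_ker hP,
    IsIdempotentElem.range_sup_ker_inf_ker hQ, LinearMap.range_le_ker_iff]
  exact (IsIdempotentElem.mul_one_sub_mul_mul_eq_zero_iff hP).symm
end

section
/- Let P, Q : V → V be projectors. Then PQ is a projector if and only if im Q ≤ im P + (ker P ∩ im Q) + (ker P ∩ ker Q). -/
/-!
`PQ` is idempotent iff `PQP = P` on `range Q`. For `x ∈ range Q`, if `PQPx = Px` then
`x = Px + (x - QPx) + (QPx - Px)` is a decomposition into the three summands. Conversely, if
`x = Pa + b + c` with `b ∈ ker P ⊓ range Q` and `c ∈ ker P ⊓ ker Q`, applying `Q` gives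
`QPa = Pa + c`, hence `PQPx = PQPa = Pa = Px`.
-/

open LinearMap

section

variable {R V : Type*} [Ring R] [AddCommGroup V] [Module R V] {P Q : V →ₗ[R] V}

theorem LinearMap.isIdempotentElem_mul_iff_forall_mem_range :
    IsIdempotentElem (P * Q) ↔ ∀ x ∈ range Q, P (Q (P x)) = P x :=
  ⟨fun h _ ⟨v, hv⟩ => hv ▸ LinearMap.congr_fun h v,
    fun h => LinearMap.ext fun v => h (Q v) (mem_range_self Q v)⟩

theorem LinearMap.mem_range_sup_ker_inf_range_sup_ker_inf_ker_iff (hP : IsIdempotentElem P)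
    (hQ : IsIdempotentElem Q) {x : V} (hx : x ∈ range Q) :
    x ∈ range P ⊔ (ker P ⊓ range Q) ⊔ (ker P ⊓ ker Q) ↔ P (Q (P x)) = P x := by
  have hPP (y : V) : P (P y) = P y := hP.mem_range_iff.mp (mem_range_self P y)
  have hQQ (y : V) : Q (Q y) = Q y := hQ.mem_range_iff.mp (mem_range_self Q y)
  have hQx : Q x = x := hQ.mem_range_iff.mp hx
  constructor
  · intro hmem
    obtain ⟨s, hs, c, ⟨hcP, hcQ⟩, rfl⟩ := Submodule.mem_sup.mp hmem
    obtain ⟨_, ⟨a, rfl⟩, b, ⟨hbP, hbQ⟩, rfl⟩ := Submodule.mem_sup.mp hs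
    rw [SetLike.mem_coe, mem_ker] at hbP hcP hcQ
    have hPx : P (P a + b + c) = P a := by simp [hbP, hcP, hPP]
    have hQPa : Q (P a) = P a + c := by
      have hQb : Q b = b := hQ.mem_range_iff.mp hbQ
      simpa [hQb, hcQ, add_right_comm _ b, add_left_inj] using hQx
    rw [hPx, hQPa, map_add, hcP, hPP, add_zero]
  · intro h
    refine Submodule.mem_sup.mpr ⟨P x + (x - Q (P x)), Submodule.mem_sup.mpr
      ⟨P x, mem_range_self P x, x - Q (P x), ⟨?_, ?_⟩, rfl⟩, Q (P x) - P x, ⟨?_, ?_⟩, by abel⟩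
    · simp [h]
    · exact ⟨x - P x, by simp [hQx]⟩
    · simp [h, hPP]
    · simp [hQQ]

end

theorem PQ_projector_iff_v2 {F V : Type*} [Field F]
    [AddCommGroup V] [Module F V]
    (P Q : V →ₗ[F] V) (hP : P ∘ₗ P = P) (hQ : Q ∘ₗ Q = Q) :
    (P ∘ₗ Q) ∘ₗ (P ∘ₗ Q) = P ∘ₗ Q ↔
      LinearMap.range Q ≤
        LinearMap.range P ⊔ (LinearMap.ker P ⊓ LinearMap.range Q) ⊔
          (LinearMap.ker P ⊓ LinearMap.ker Q) :=
  isIdempotentElem_mul_iff_forall_mem_range.trans <| forall₂_congr fun _ hx =>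
    (mem_range_sup_ker_inf_range_sup_ker_inf_ker_iff hP hQ hx).symm
end

section
/- Let P, Q : V → V be projectors. Then PQ is a projector if and only if ker P ⊇ ker Q ∩ (im Q + ker P) ∩ (im Q + im P). -/
/-!
If `PQ` is idempotent, `P` maps `im Q + ker P` into `im (PQ)`, and (using `Q x = 0`) maps
`ker Q ∩ (im Q + im P)` into `im (1 - PQ) = ker (PQ)`; these two meet only in `0`.
Conversely, for every `v` the vector `QPQv - PQv` lies in the triple intersection, and `P` kills it
exactly when `PQPQv = PQv`.
-/

section

variable {R M : Type*} [Ring R] [AddCommGroup M] [Module R M]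

theorem IsIdempotentElem.apply_apply {P : M →ₗ[R] M} (hP : IsIdempotentElem P) (x : M) :
    P (P x) = P x :=
  congr($hP x)

namespace LinearMap

theorem apply_mem_range_comp_of_mem_range_sup_ker {P Q : M →ₗ[R] M} {x : M}
    (hx : x ∈ range Q ⊔ ker P) : P x ∈ range (P ∘ₗ Q) := by
  obtain ⟨_, ⟨a, rfl⟩, k, hk, rfl⟩ := Submodule.mem_sup.1 hx
  exact ⟨a, by rw [comp_apply, map_add, mem_ker.1 hk, add_zero]⟩

theorem apply_mem_range_id_sub_comp_of_mem_ker_inf_range_sup_range {P Q : M →ₗ[R] M}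
    (hP : IsIdempotentElem P) (hQ : IsIdempotentElem Q) {x : M}
    (hx : x ∈ ker Q ⊓ (range Q ⊔ range P)) : P x ∈ range (id - P ∘ₗ Q) := by
  obtain ⟨hxQ, hx⟩ := hx
  obtain ⟨_, ⟨b, rfl⟩, _, ⟨c, rfl⟩, rfl⟩ := Submodule.mem_sup.1 hx
  have hQb : Q b = -Q (P c) := by
    rw [SetLike.mem_coe, mem_ker, map_add, hQ.apply_apply] at hxQ
    exact eq_neg_of_add_eq_zero_left hxQ
  refine ⟨P c, ?_⟩
  rw [sub_apply, id_apply, comp_apply, map_add, hQb, map_neg, hP.apply_apply]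
  abel

theorem sub_mem_ker_inf_range_sup_ker_inf_range_sup_range {P Q : M →ₗ[R] M}
    (hP : IsIdempotentElem P) (hQ : IsIdempotentElem Q) (v : M) :
    Q (P (Q v)) - P (Q v) ∈ ker Q ⊓ (range Q ⊔ ker P) ⊓ (range Q ⊔ range P) := by
  refine ⟨⟨?_, ?_⟩, ?_⟩
  · rw [SetLike.mem_coe, mem_ker, map_sub, hQ.apply_apply, sub_self]
  · refine Submodule.mem_sup.2 ⟨Q (P (Q v) - v), ⟨_, rfl⟩, Q v - P (Q v), ?_, ?_⟩
    · rw [mem_ker, map_sub, hP.apply_apply, sub_self]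
    · rw [map_sub]; abel
  · exact Submodule.mem_sup.2
      ⟨Q (P (Q v)), ⟨_, rfl⟩, -P (Q v), neg_mem ⟨_, rfl⟩, by abel⟩

end LinearMap

end

theorem PQ_projector_iff_v3 {F V : Type*} [Field F]
    [AddCommGroup V] [Module F V]
    (P Q : V →ₗ[F] V) (hP : P ∘ₗ P = P) (hQ : Q ∘ₗ Q = Q) :
    (P ∘ₗ Q) ∘ₗ (P ∘ₗ Q) = P ∘ₗ Q ↔
      LinearMap.ker Q ⊓ (LinearMap.range Q ⊔ LinearMap.ker P) ⊓
          (LinearMap.range Q ⊔ LinearMap.range P) ≤ LinearMap.ker P := by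
  constructor
  · intro (hPQ : IsIdempotentElem (P ∘ₗ Q)) x ⟨⟨hxQ, hx₁⟩, hx₂⟩
    have h_range := LinearMap.apply_mem_range_comp_of_mem_range_sup_ker hx₁
    have h_ker : P x ∈ LinearMap.ker (P ∘ₗ Q) := by
      rw [LinearMap.IsIdempotentElem.ker_eq_range hPQ]
      exact LinearMap.apply_mem_range_id_sub_comp_of_mem_ker_inf_range_sup_range hP hQ
        ⟨hxQ, hx₂⟩
    exact Submodule.disjoint_def.1 (LinearMap.IsIdempotentElem.isCompl hPQ).disjoint _
      h_range h_ker
  · intro h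
    ext v
    have hw := h (LinearMap.sub_mem_ker_inf_range_sup_ker_inf_range_sup_range hP hQ v)
    rwa [LinearMap.mem_ker, map_sub, sub_eq_zero, IsIdempotentElem.apply_apply hP] at hw
end

section
/- Let P, Q : V → V be projectors. Then PQ is a projector with im(PQ) = im P ∩ im Q if and only if im Q = (im P ∩ im Q) ⊕ (ker P ∩ im Q). -/
/-!
Both sides say that `P ∘ₗ Q` is the projection onto `range P ⊓ range Q`. If it is, each
`x ∈ range Q` splits as `P x + (x - P x)` with `x - P x ∈ ker P`; conversely `P` kills the
`ker P` component of `Q v` and fixes the other one. Disjointness is automatic, since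
`range P ⊓ ker P = ⊥` for an idempotent `P`.
-/

namespace LinearMap

variable {R M : Type*} [Ring R] [AddCommGroup M] [Module R M]

theorem comp_self_eq_and_range_eq_iff_isProj (f : M →ₗ[R] M) (m : Submodule R M) :
    (f ∘ₗ f = f ∧ range f = m) ↔ IsProj m f :=
  ⟨fun ⟨hf, hm⟩ => hm ▸ (isProj_range_iff_isIdempotentElem f).mpr hf,
    fun h => ⟨h.isIdempotentElem, h.range⟩⟩

theorem IsIdempotentElem.disjoint_inf_range_inf_ker {P : M →ₗ[R] M} (hP : IsIdempotentElem P)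
    (U W : Submodule R M) : Disjoint (range P ⊓ U) (ker P ⊓ W) :=
  (IsIdempotentElem.isCompl hP).disjoint.mono inf_le_left inf_le_left

theorem isProj_inf_range_comp_iff {P Q : M →ₗ[R] M} (hP : IsIdempotentElem P)
    (hQ : IsIdempotentElem Q) :
    IsProj (range P ⊓ range Q) (P ∘ₗ Q) ↔
      range Q ≤ (range P ⊓ range Q) ⊔ (ker P ⊓ range Q) := by
  constructor
  · intro h x hx
    have hQx : Q x = x := (IsIdempotentElem.mem_range_iff hQ).mp hx
    have hPx : P x ∈ range P ⊓ range Q := hQx ▸ h.map_mem x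
    have hker : x - P x ∈ ker P := by
      rw [mem_ker, map_sub, ← Module.End.mul_apply, hP.eq, sub_self]
    rw [← add_sub_cancel (P x) x]
    exact Submodule.add_mem_sup hPx ⟨hker, sub_mem hx hPx.2⟩
  · intro h
    constructor
    · intro v
      obtain ⟨a, ha, b, hb, hab⟩ := Submodule.mem_sup.mp (h (mem_range_self Q v))
      rw [comp_apply, ← hab, map_add, (IsIdempotentElem.mem_range_iff hP).mp ha.1, mem_ker.mp hb.1, add_zero]
      exact ha
    · rintro x ⟨hxP, hxQ⟩
      rw [comp_apply, (IsIdempotentElem.mem_range_iff hQ).mp hxQ, (IsIdempotentElem.mem_range_iff hP).mp hxP]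

end LinearMap

theorem PQ_projector_range_inter_iff {F V : Type*} [Field F]
    [AddCommGroup V] [Module F V]
    (P Q : V →ₗ[F] V) (hP : P ∘ₗ P = P) (hQ : Q ∘ₗ Q = Q) :
    ((P ∘ₗ Q) ∘ₗ (P ∘ₗ Q) = P ∘ₗ Q ∧
        LinearMap.range (P ∘ₗ Q) = LinearMap.range P ⊓ LinearMap.range Q) ↔
      (LinearMap.range Q =
          (LinearMap.range P ⊓ LinearMap.range Q) ⊔
            (LinearMap.ker P ⊓ LinearMap.range Q) ∧
        Disjoint (LinearMap.range P ⊓ LinearMap.range Q)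
          (LinearMap.ker P ⊓ LinearMap.range Q)) := by
  have hP : IsIdempotentElem P := hP
  rw [LinearMap.comp_self_eq_and_range_eq_iff_isProj, LinearMap.isProj_inf_range_comp_iff hP hQ]
  exact ⟨fun h => ⟨le_antisymm h (sup_le inf_le_right inf_le_right),
      LinearMap.IsIdempotentElem.disjoint_inf_range_inf_ker hP _ _⟩, fun h => h.1.le⟩
end

section
/- Let P, Q : V → V be projectors. Then PQ is a projector with ker(PQ) = ker P + ker Q if and only if ker P = (ker P ∩ ker Q) ⊕ (ker P ∩ im Q). -/
/-!
Everything reduces to the `Q`-invariance of `ker P`. Since `ker (P ∘ Q) = Q⁻¹(ker P)` and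
`x = Q x + (x - Q x)` with `x - Q x ∈ ker Q`, the equality `ker (P ∘ Q) = ker P ⊔ ker Q` says
exactly that `Q` maps `ker P` into itself; invariance also gives `P Q P = P Q`, hence
`(P Q)² = P Q`. On the other side, a submodule `W` splits as `(W ⊓ ker Q) ⊕ (W ⊓ range Q)`
iff `Q W ≤ W`, the sum being always direct because `ker Q ⊓ range Q = ⊥`.
-/

section

open LinearMap Module.End

variable {R M : Type*} [Ring R] [AddCommGroup M] [Module R M] {P Q : M →ₗ[R] M}

theorem LinearMap.IsIdempotentElem.apply_apply (hQ : IsIdempotentElem Q) (x : M) :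
    Q (Q x) = Q x :=
  hQ.mem_range_iff.mp (mem_range_self Q x)

theorem LinearMap.IsIdempotentElem.comap_le_sup_ker (hQ : IsIdempotentElem Q)
    (W : Submodule R M) : W.comap Q ≤ W ⊔ ker Q := fun x hx =>
  Submodule.mem_sup.mpr ⟨Q x, hx, x - Q x, by simp [hQ.apply_apply], add_sub_cancel _ _⟩

theorem LinearMap.IsIdempotentElem.eq_inf_ker_sup_inf_range_iff (hQ : IsIdempotentElem Q)
    (W : Submodule R M) : W = (W ⊓ ker Q) ⊔ (W ⊓ range Q) ↔ W ∈ invtSubmodule Q := by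
  rw [mem_invtSubmodule]
  constructor
  · intro hW x hx
    rw [hW, Submodule.mem_sup] at hx
    obtain ⟨a, ⟨-, haQ⟩, b, ⟨hbW, hbQ⟩, rfl⟩ := hx
    simpa [mem_ker.mp haQ, hQ.mem_range_iff.mp hbQ] using hbW
  · intro hW
    refine le_antisymm (fun x hx => Submodule.mem_sup.mpr ?_) (sup_le inf_le_left inf_le_left)
    exact ⟨x - Q x, ⟨W.sub_mem hx (hW hx), by simp [hQ.apply_apply]⟩,
      Q x, ⟨hW hx, mem_range_self Q x⟩, sub_add_cancel _ _⟩

theorem LinearMap.IsIdempotentElem.disjoint_inf_ker_inf_range (hQ : IsIdempotentElem Q)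
    (W : Submodule R M) : Disjoint (W ⊓ ker Q) (W ⊓ range Q) :=
  hQ.isCompl.disjoint.symm.mono inf_le_right inf_le_right

theorem LinearMap.IsIdempotentElem.comp_of_ker_mem_invtSubmodule (hP : IsIdempotentElem P)
    (hQ : IsIdempotentElem Q) (h : ker P ∈ invtSubmodule Q) : IsIdempotentElem (P ∘ₗ Q) := by
  have hPQP : P ∘ₗ Q ∘ₗ P = P ∘ₗ Q := hP.ker_mem_invtSubmodule_iff.mp h
  calc (P ∘ₗ Q) ∘ₗ (P ∘ₗ Q) = (P ∘ₗ Q ∘ₗ P) ∘ₗ Q := rfl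
    _ = P ∘ₗ (Q ∘ₗ Q) := by rw [hPQP]; rfl
    _ = P ∘ₗ Q := congrArg (P ∘ₗ ·) hQ.eq

theorem LinearMap.ker_comp_eq_ker_sup_ker_iff {N : Type*} [AddCommGroup N] [Module R N]
    {P : M →ₗ[R] N} (hQ : IsIdempotentElem Q) :
    ker (P ∘ₗ Q) = ker P ⊔ ker Q ↔ ker P ∈ invtSubmodule Q := by
  rw [mem_invtSubmodule, ker_comp]
  refine ⟨fun h => h ▸ le_sup_left, fun h => le_antisymm (hQ.comap_le_sup_ker _) ?_⟩
  exact sup_le h (ker_comp Q P ▸ ker_le_ker_comp Q P)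

end

theorem PQ_projector_ker_sum_iff {F V : Type*} [Field F]
    [AddCommGroup V] [Module F V]
    (P Q : V →ₗ[F] V) (hP : P ∘ₗ P = P) (hQ : Q ∘ₗ Q = Q) :
    ((P ∘ₗ Q) ∘ₗ (P ∘ₗ Q) = P ∘ₗ Q ∧
        LinearMap.ker (P ∘ₗ Q) = LinearMap.ker P ⊔ LinearMap.ker Q) ↔
      (LinearMap.ker P =
          (LinearMap.ker P ⊓ LinearMap.ker Q) ⊔
            (LinearMap.ker P ⊓ LinearMap.range Q) ∧
        Disjoint (LinearMap.ker P ⊓ LinearMap.ker Q)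
          (LinearMap.ker P ⊓ LinearMap.range Q)) := by
  have hP : IsIdempotentElem P := hP
  have hQ : IsIdempotentElem Q := hQ
  open LinearMap in
  rw [and_iff_left (hQ.disjoint_inf_ker_inf_range _), hQ.eq_inf_ker_sup_inf_range_iff,
    ← ker_comp_eq_ker_sup_ker_iff hQ]
  refine ⟨And.right, fun h => ⟨?_, h⟩⟩
  open LinearMap in
  exact hP.comp_of_ker_mem_invtSubmodule hQ ((ker_comp_eq_ker_sup_ker_iff hQ).mp h)
end

section
/- Let P, Q : V → V be projectors. Then PQ = QP if and only if both im Q = (im P ∩ im Q) ⊕ (ker P ∩ im Q) and ker Q = (im P ∩ ker Q) ⊕ (ker P ∩ ker Q). -/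
/-!
Two idempotents commute iff the range and the kernel of one are invariant under the other.
A submodule `W` is invariant under an idempotent `P` exactly when it splits along
`V = range P ⊕ ker P`, i.e. `W = (range P ⊓ W) ⊔ (ker P ⊓ W)`: `w = P w + (w - P w)` gives the
splitting, and `P` fixes the first summand and kills the second.
-/

namespace LinearMap.IsIdempotentElem

open Submodule

variable {R E : Type*} [Ring R] [AddCommGroup E] [Module R E] {f : E →ₗ[R] E}

lemma mem_invtSubmodule_iff_eq_range_inf_sup_ker_inf (hf : IsIdempotentElem f)
    {W : Submodule R E} :
    W ∈ Module.End.invtSubmodule f ↔ W = (range f ⊓ W) ⊔ (ker f ⊓ W) := by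
  rw [Module.End.mem_invtSubmodule_iff_forall_mem_of_mem]
  refine ⟨fun hW => le_antisymm (fun w hw => ?_) (sup_le inf_le_right inf_le_right), fun hW => ?_⟩
  · have hfw : f (w - f w) = 0 := by rw [map_sub, ← Module.End.mul_apply, hf.eq, sub_self]
    exact mem_sup.2 ⟨f w, ⟨mem_range_self f w, hW w hw⟩,
      w - f w, ⟨hfw, sub_mem hw (hW w hw)⟩, add_sub_cancel _ _⟩
  · intro w hw
    rw [hW] at hw ⊢
    obtain ⟨a, ⟨ha, haW⟩, b, ⟨hb, -⟩, rfl⟩ := mem_sup.1 hw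
    rw [map_add, (mem_range_iff hf).1 ha, mem_ker.1 hb, add_zero]
    exact mem_sup_left ⟨ha, haW⟩

lemma disjoint_range_inf_ker_inf (hf : IsIdempotentElem f) (W W' : Submodule R E) :
    Disjoint (range f ⊓ W) (ker f ⊓ W') :=
  (isCompl hf).disjoint.mono inf_le_left inf_le_left

end LinearMap.IsIdempotentElem

open LinearMap.IsIdempotentElem in
theorem projectors_commute_iff {F V : Type*} [Field F]
    [AddCommGroup V] [Module F V]
    (P Q : V →ₗ[F] V) (hP : P ∘ₗ P = P) (hQ : Q ∘ₗ Q = Q) :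
    P ∘ₗ Q = Q ∘ₗ P ↔
      ((LinearMap.range Q =
          (LinearMap.range P ⊓ LinearMap.range Q) ⊔
            (LinearMap.ker P ⊓ LinearMap.range Q) ∧
        Disjoint (LinearMap.range P ⊓ LinearMap.range Q)
          (LinearMap.ker P ⊓ LinearMap.range Q)) ∧
       (LinearMap.ker Q =
          (LinearMap.range P ⊓ LinearMap.ker Q) ⊔
            (LinearMap.ker P ⊓ LinearMap.ker Q) ∧
        Disjoint (LinearMap.range P ⊓ LinearMap.ker Q)
          (LinearMap.ker P ⊓ LinearMap.ker Q))) := by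
  have hP : IsIdempotentElem P := hP
  have hQ : IsIdempotentElem Q := hQ
  have hcomm : P ∘ₗ Q = Q ∘ₗ P ↔ Commute Q P := eq_comm
  rw [hcomm, commute_iff hQ, mem_invtSubmodule_iff_eq_range_inf_sup_ker_inf hP,
    mem_invtSubmodule_iff_eq_range_inf_sup_ker_inf hP]
  simp only [disjoint_range_inf_ker_inf hP, and_true]
end

section
/- Let T₁ : V → W and T₂ : U → V be linear. Then G₂G₁ is an inner inverse of T₁T₂ for all inner inverses G₁ of T₁ and G₂ of T₂ if and only if T₁T₂ = 0 or ker T₁ ≤ im T₂. -/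
/-!
If `ker T₁ ≤ range T₂`, then for every `u` the vector `G₁ T₁ T₂ u` differs from `T₂ u` by an element
of `ker T₁`, so it lies in `range T₂`, where `T₂ G₂` acts as the identity; hence
`T₁ T₂ G₂ G₁ T₁ T₂ = T₁ G₁ T₁ T₂ = T₁ T₂`.

Conversely, an inner inverse of `T` may be prescribed freely at a vector outside `range T`, and at a
nonzero `T v` it may be prescribed to be any preimage `v`. Given `u` with `w = T₁ T₂ u ≠ 0` and
`k ∈ ker T₁ \ range T₂`, choose `G₁ w = T₂ u + k` and `G₂ k = u`; then
`T₁ T₂ G₂ G₁ T₁ T₂ u = T₁ T₂ G₂ T₂ u + T₁ T₂ u = 2 w ≠ w`.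
-/

namespace LinearMap

variable {K U V W : Type*} [DivisionRing K]
  [AddCommGroup U] [Module K U] [AddCommGroup V] [Module K V] [AddCommGroup W] [Module K W]

def IsInnerInverse (T : V →ₗ[K] W) (G : W →ₗ[K] V) : Prop :=
  T ∘ₗ G ∘ₗ T = T

namespace IsInnerInverse

variable {T : V →ₗ[K] W} {G : W →ₗ[K] V}

theorem apply_apply_apply (h : T.IsInnerInverse G) (v : V) : T (G (T v)) = T v :=
  LinearMap.congr_fun h v

theorem of_comp_subtype {s : range T →ₗ[K] V} (hs : T.rangeRestrict ∘ₗ s = id)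
    (hG : G ∘ₗ (range T).subtype = s) : T.IsInnerInverse G := by
  ext v
  have hGs := LinearMap.congr_fun hG ⟨T v, mem_range_self T v⟩
  have hTs := congrArg Subtype.val (LinearMap.congr_fun hs ⟨T v, mem_range_self T v⟩)
  simp only [comp_apply, Submodule.subtype_apply] at hGs
  simpa [hGs] using hTs

theorem add_subtype_comp (h : T.IsInnerInverse G) (g : W →ₗ[K] ker T) :
    T.IsInnerInverse (G + (ker T).subtype ∘ₗ g) := by
  ext v
  simp [h.apply_apply_apply v]

end IsInnerInverse

theorem exists_isInnerInverse (T : V →ₗ[K] W) : ∃ G, T.IsInnerInverse G := by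
  obtain ⟨s, hs⟩ := T.rangeRestrict.exists_rightInverse_of_surjective T.range_rangeRestrict
  obtain ⟨G, hG⟩ := s.exists_extend
  exact ⟨G, .of_comp_subtype hs hG⟩

theorem exists_isInnerInverse_apply_eq_of_notMem_range (T : V →ₗ[K] W) {w : W}
    (hw : w ∉ range T) (v : V) : ∃ G, T.IsInnerInverse G ∧ G w = v := by
  obtain ⟨s, hs⟩ := T.rangeRestrict.exists_rightInverse_of_surjective T.range_rangeRestrict
  obtain ⟨G, hG, hGw⟩ := s.exists_extend_of_notMem hw v
  exact ⟨G, .of_comp_subtype hs hG, hGw⟩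

theorem exists_isInnerInverse_apply_eq_of_apply_eq (T : V →ₗ[K] W) {v : V} {w : W}
    (hv : T v = w) (hw : w ≠ 0) : ∃ G, T.IsInnerInverse G ∧ G w = v := by
  obtain ⟨G₀, hG₀⟩ := T.exists_isInnerInverse
  have hx : v - G₀ w ∈ ker T := by
    simp [← hv, hG₀.apply_apply_apply]
  obtain ⟨g, -, hgw⟩ := (0 : (⊥ : Submodule K W) →ₗ[K] ker T).exists_extend_of_notMem
    (Submodule.mem_bot K |>.not.mpr hw) ⟨v - G₀ w, hx⟩
  refine ⟨G₀ + (ker T).subtype ∘ₗ g, hG₀.add_subtype_comp g, ?_⟩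
  simp [hgw]

namespace IsInnerInverse

variable {T₁ : V →ₗ[K] W} {T₂ : U →ₗ[K] V} {G₁ : W →ₗ[K] V} {G₂ : V →ₗ[K] U}

theorem comp_of_ker_le_range (h₁ : T₁.IsInnerInverse G₁) (h₂ : T₂.IsInnerInverse G₂)
    (hker : ker T₁ ≤ range T₂) : (T₁ ∘ₗ T₂).IsInnerInverse (G₂ ∘ₗ G₁) := by
  ext u
  have hmem : G₁ (T₁ (T₂ u)) - T₂ u ∈ ker T₁ := by
    simp [h₁.apply_apply_apply]
  obtain ⟨x, hx⟩ : G₁ (T₁ (T₂ u)) ∈ range T₂ := by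
    simpa using add_mem (hker hmem) (mem_range_self T₂ u)
  simp only [comp_apply]
  rw [← hx, h₂.apply_apply_apply, hx, h₁.apply_apply_apply]

end IsInnerInverse

theorem exists_not_isInnerInverse_comp {T₁ : V →ₗ[K] W} {T₂ : U →ₗ[K] V}
    (hT : T₁ ∘ₗ T₂ ≠ 0) (hker : ¬ ker T₁ ≤ range T₂) :
    ∃ G₁ G₂, T₁.IsInnerInverse G₁ ∧ T₂.IsInnerInverse G₂ ∧
      ¬ (T₁ ∘ₗ T₂).IsInnerInverse (G₂ ∘ₗ G₁) := by
  obtain ⟨u, hu⟩ : ∃ u, T₁ (T₂ u) ≠ 0 := by simpa [LinearMap.ext_iff] using hT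
  obtain ⟨k, hk, hkT₂⟩ := SetLike.not_le_iff_exists.mp hker
  obtain ⟨G₁, h₁, hG₁⟩ := T₁.exists_isInnerInverse_apply_eq_of_apply_eq
    (v := T₂ u + k) (by simp [mem_ker.mp hk]) hu
  obtain ⟨G₂, h₂, hG₂⟩ := T₂.exists_isInnerInverse_apply_eq_of_notMem_range hkT₂ u
  refine ⟨G₁, G₂, h₁, h₂, fun h ↦ hu ?_⟩
  have hdouble : T₁ (T₂ u) + T₁ (T₂ u) = T₁ (T₂ u) := by
    simpa [hG₁, hG₂, h₂.apply_apply_apply] using LinearMap.congr_fun h u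
  simpa using hdouble

end LinearMap

theorem all_inner_inverses_reverse_order_iff {F U V W : Type*} [Field F]
    [AddCommGroup U] [Module F U] [AddCommGroup V] [Module F V]
    [AddCommGroup W] [Module F W]
    (T₁ : V →ₗ[F] W) (T₂ : U →ₗ[F] V) :
    (∀ (G₁ : W →ₗ[F] V) (G₂ : V →ₗ[F] U),
        T₁ ∘ₗ G₁ ∘ₗ T₁ = T₁ → T₂ ∘ₗ G₂ ∘ₗ T₂ = T₂ →
        (T₁ ∘ₗ T₂) ∘ₗ (G₂ ∘ₗ G₁) ∘ₗ (T₁ ∘ₗ T₂) = T₁ ∘ₗ T₂) ↔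
      (T₁ ∘ₗ T₂ = 0 ∨ LinearMap.ker T₁ ≤ LinearMap.range T₂) := by
  constructor
  · intro H
    by_contra! h
    obtain ⟨G₁, G₂, h₁, h₂, hnot⟩ := LinearMap.exists_not_isInnerInverse_comp h.1 h.2
    exact hnot (H G₁ G₂ h₁ h₂)
  · rintro (hzero | hker) G₁ G₂ h₁ h₂
    · simp [hzero]
    · exact LinearMap.IsInnerInverse.comp_of_ker_le_range h₁ h₂ hker
end

section
/- Let T₁ : V → W and T₂ : U → V be linear maps. Then there exist linear maps G₁ : W → V and G₂ : V → U with T₁G₁T₁ = T₁, G₁T₁G₁ = G₁, T₂G₂T₂ = T₂, G₂T₂G₂ = G₂, such that G₂G₁ satisfies (T₁T₂)(G₂G₁)(T₁T₂) = T₁T₂ and (G₂G₁)(T₁T₂)(G₂G₁) = G₂G₁. -/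
/-!
If `G₁ ∘ T₁` and `T₂ ∘ G₂` commute, regrouping the products shows that `G₂ ∘ G₁` is an algebraic
generalized inverse of `T₁ ∘ T₂`. An algebraic generalized inverse `G` of `T` can be built from
any complement `M` of `ker T` and any complement `N` of `range T`, so that `G ∘ T` is the
projection onto `M` along `ker T` and `T ∘ G` the projection onto `range T` along `N`. Two
projections commute when the range and kernel of one both split along the range and kernel of the
other. Such complements exist: decompose `V = A ⊕ B ⊕ C ⊕ D` with `A = ker T₁ ⊓ range T₂`,
`ker T₁ = A ⊕ B`, `range T₂ = A ⊕ C`, and take `M = C ⊕ D`, `N = B ⊕ D`.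
-/

open Submodule LinearMap

section Lattice

variable {α : Type*} [Lattice α] [BoundedOrder α] [IsModularLattice α] [ComplementedLattice α]

theorem exists_isCompl_isCompl_compatible (a b : α) :
    ∃ m n, IsCompl a m ∧ IsCompl b n ∧ b ≤ b ⊓ m ⊔ b ⊓ a ∧ n ≤ n ⊓ m ⊔ n ⊓ a := by
  obtain ⟨e, hae, hea⟩ := IsModularLattice.exists_disjoint_and_sup_eq (inf_le_left : a ⊓ b ≤ a)
  obtain ⟨c, hac, hcb⟩ := IsModularLattice.exists_disjoint_and_sup_eq (inf_le_right : a ⊓ b ≤ b)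
  obtain ⟨d, hd⟩ := exists_isCompl (a ⊔ b)
  have hc : c ≤ b := hcb ▸ le_sup_right
  have he : e ≤ a := hea ▸ le_sup_right
  have hm : IsCompl a (c ⊔ d) := by
    refine Disjoint.isCompl_sup_right_of_isCompl_sup_left ?_ ?_
    · exact disjoint_iff_inf_le.2 ((le_inf (inf_le_inf_left a hc) inf_le_right).trans hac.le_bot)
    · convert hd using 1
      rw [← hcb, ← sup_assoc, sup_inf_self]
  have hn : IsCompl b (e ⊔ d) := by
    refine Disjoint.isCompl_sup_right_of_isCompl_sup_left ?_ ?_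
    · exact disjoint_iff_inf_le.2
        ((le_inf (inf_le_inf_left b he) inf_le_right).trans (inf_comm a b ▸ hae.le_bot))
    · convert hd using 1
      rw [sup_comm a b, ← hea, ← sup_assoc, inf_comm a b, sup_inf_self]
  refine ⟨c ⊔ d, e ⊔ d, hm, hn, ?_, ?_⟩
  · conv_lhs => rw [← hcb]
    exact sup_le (le_sup_of_le_right (inf_comm a b).le) (le_sup_of_le_left (le_inf hc le_sup_left))
  · exact sup_le (le_sup_of_le_right (le_inf le_sup_left he))
      (le_sup_of_le_left (le_inf le_sup_right le_sup_right))

end Lattice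

namespace Submodule

variable {R E : Type*} [Ring R] [AddCommGroup E] [Module R E] {p q : Submodule R E}

theorem mem_invtSubmodule_projection (hpq : IsCompl p q) {s : Submodule R E}
    (hs : s ≤ s ⊓ p ⊔ s ⊓ q) : s ∈ Module.End.invtSubmodule (p.projection q hpq) := by
  intro x hx
  obtain ⟨y, hy, z, hz, rfl⟩ := mem_sup.1 (hs hx)
  simpa [projection_apply_of_mem_left hpq hy.2, projection_apply_of_mem_right hpq hz.2] using hy.1

theorem commute_projection (hpq : IsCompl p q) {s t : Submodule R E} (hst : IsCompl s t)
    (hs : s ≤ s ⊓ p ⊔ s ⊓ q) (ht : t ≤ t ⊓ p ⊔ t ⊓ q) :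
    Commute (s.projection t hst) (p.projection q hpq) := by
  rw [(isIdempotentElem_projection hst).commute_iff, range_projection, ker_projection]
  exact ⟨mem_invtSubmodule_projection hpq hs, mem_invtSubmodule_projection hpq ht⟩

end Submodule

namespace LinearMap

section Semiring

variable {R U V W : Type*} [Semiring R] [AddCommMonoid U] [Module R U] [AddCommMonoid V]
  [Module R V] [AddCommMonoid W] [Module R W]

def IsAlgGenInverse (T : V →ₗ[R] W) (G : W →ₗ[R] V) : Prop :=
  T ∘ₗ G ∘ₗ T = T ∧ G ∘ₗ T ∘ₗ G = G

theorem IsAlgGenInverse.comp {T₁ : V →ₗ[R] W} {T₂ : U →ₗ[R] V} {G₁ : W →ₗ[R] V}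
    {G₂ : V →ₗ[R] U} (h₁ : IsAlgGenInverse T₁ G₁) (h₂ : IsAlgGenInverse T₂ G₂)
    (hcomm : Commute (T₂ ∘ₗ G₂) (G₁ ∘ₗ T₁)) : IsAlgGenInverse (T₁ ∘ₗ T₂) (G₂ ∘ₗ G₁) := by
  have hcomm' : (T₂ ∘ₗ G₂) ∘ₗ G₁ ∘ₗ T₁ = (G₁ ∘ₗ T₁) ∘ₗ T₂ ∘ₗ G₂ := hcomm.eq
  constructor
  · calc (T₁ ∘ₗ T₂) ∘ₗ (G₂ ∘ₗ G₁) ∘ₗ T₁ ∘ₗ T₂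
        = T₁ ∘ₗ ((T₂ ∘ₗ G₂) ∘ₗ G₁ ∘ₗ T₁) ∘ₗ T₂ := by simp only [comp_assoc]
      _ = (T₁ ∘ₗ G₁ ∘ₗ T₁) ∘ₗ T₂ ∘ₗ G₂ ∘ₗ T₂ := by rw [hcomm']; simp only [comp_assoc]
      _ = T₁ ∘ₗ T₂ := by rw [h₁.1, h₂.1]
  · calc (G₂ ∘ₗ G₁) ∘ₗ (T₁ ∘ₗ T₂) ∘ₗ G₂ ∘ₗ G₁
        = G₂ ∘ₗ ((G₁ ∘ₗ T₁) ∘ₗ T₂ ∘ₗ G₂) ∘ₗ G₁ := by simp only [comp_assoc]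
      _ = (G₂ ∘ₗ T₂ ∘ₗ G₂) ∘ₗ G₁ ∘ₗ T₁ ∘ₗ G₁ := by rw [← hcomm']; simp only [comp_assoc]
      _ = G₂ ∘ₗ G₁ := by rw [h₁.2, h₂.2]

end Semiring

section Ring

variable {R V W : Type*} [Ring R] [AddCommGroup V] [Module R V] [AddCommGroup W] [Module R W]
  (T : V →ₗ[R] W) {M : Submodule R V} {N : Submodule R W}

noncomputable def rangeEquivOfIsCompl (hM : IsCompl (ker T) M) : M ≃ₗ[R] range T :=
  (quotientEquivOfIsCompl _ _ hM).symm.trans T.quotKerEquivRange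

noncomputable def genInverse (hM : IsCompl (ker T) M) (hN : IsCompl (range T) N) :
    W →ₗ[R] V :=
  M.subtype ∘ₗ (T.rangeEquivOfIsCompl hM).symm.toLinearMap ∘ₗ (range T).projectionOnto N hN

variable {T}

theorem genInverse_mem (hM : IsCompl (ker T) M) (hN : IsCompl (range T) N) (w : W) :
    T.genInverse hM hN w ∈ M :=
  coe_mem _

theorem comp_genInverse (hM : IsCompl (ker T) M) (hN : IsCompl (range T) N) :
    T ∘ₗ T.genInverse hM hN = (range T).projection N hN := by
  ext w
  exact congr_arg Subtype.val ((T.rangeEquivOfIsCompl hM).apply_symm_apply _)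

theorem genInverse_comp (hM : IsCompl (ker T) M) (hN : IsCompl (range T) N) :
    T.genInverse hM hN ∘ₗ T = M.projection (ker T) hM.symm := by
  ext v
  have hTv : T (M.projection (ker T) hM.symm v) = T v := by
    rw [eq_comm, ← sub_eq_zero, ← map_sub]
    exact sub_projection_mem hM.symm v
  simp only [genInverse, coe_comp, Function.comp_apply,
    projectionOnto_apply_of_mem_left hN (mem_range_self T v)]
  rw [← coe_projectionOnto_apply, subtype_apply, LinearEquiv.coe_coe]
  congr 1
  rw [LinearEquiv.symm_apply_eq]
  exact Subtype.ext hTv.symm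

theorem isAlgGenInverse_genInverse (hM : IsCompl (ker T) M) (hN : IsCompl (range T) N) :
    IsAlgGenInverse T (T.genInverse hM hN) := by
  constructor
  · rw [← comp_assoc, comp_genInverse]
    ext v
    exact projection_apply_of_mem_left hN (mem_range_self T v)
  · rw [← comp_assoc, genInverse_comp]
    ext w
    exact projection_apply_of_mem_left hM.symm (genInverse_mem hM hN w)

end Ring

end LinearMap

theorem exists_agis_reverse_order {F U V W : Type*} [Field F]
    [AddCommGroup U] [Module F U] [AddCommGroup V] [Module F V]
    [AddCommGroup W] [Module F W]
    (T₁ : V →ₗ[F] W) (T₂ : U →ₗ[F] V) :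
    ∃ (G₁ : W →ₗ[F] V) (G₂ : V →ₗ[F] U),
      T₁ ∘ₗ G₁ ∘ₗ T₁ = T₁ ∧ G₁ ∘ₗ T₁ ∘ₗ G₁ = G₁ ∧
      T₂ ∘ₗ G₂ ∘ₗ T₂ = T₂ ∧ G₂ ∘ₗ T₂ ∘ₗ G₂ = G₂ ∧
      (T₁ ∘ₗ T₂) ∘ₗ (G₂ ∘ₗ G₁) ∘ₗ (T₁ ∘ₗ T₂) = T₁ ∘ₗ T₂ ∧
      (G₂ ∘ₗ G₁) ∘ₗ (T₁ ∘ₗ T₂) ∘ₗ (G₂ ∘ₗ G₁) = G₂ ∘ₗ G₁ := by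
  obtain ⟨M, N, hM, hN, hRN, hNN⟩ := exists_isCompl_isCompl_compatible (ker T₁) (range T₂)
  obtain ⟨S, hS⟩ := (range T₁).exists_isCompl
  obtain ⟨E, hE⟩ := (ker T₂).exists_isCompl
  have h₁ := isAlgGenInverse_genInverse hM hS
  have h₂ := isAlgGenInverse_genInverse hE hN
  have hcomm : Commute (T₂ ∘ₗ T₂.genInverse hE hN) (T₁.genInverse hM hS ∘ₗ T₁) := by
    rw [comp_genInverse, genInverse_comp]
    exact commute_projection hM.symm hN hRN hNN
  obtain ⟨h₁₂, h₁₂'⟩ := h₁.comp h₂ hcomm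
  exact ⟨_, _, h₁.1, h₁.2, h₂.1, h₂.2, h₁₂, h₁₂'⟩
end
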